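/- Let α > 1 and suppose v : [0,∞) → ℝ is continuously differentiable, satisfies v'(t) = -v(t) + 2v(αt) - v(αt)² with v(0) = 0, and |v(t)| ≤ C e^{-ρt} for some ρ > 1 and all t ≥ 0. Then v ≡ 0. -/

import Mathlib

open Real Filter MeasureTheory intervalIntegral

lemma integral_exp_mul_real {c : ℝ} (hc : c ≠ 0) (a b : ℝ) :
    ∫ x in a..b, Real.exp (c * x) = (Real.exp (c * b) - Real.exp (c * a)) / c := by
  have D : ∀ x : ℝ, HasDerivAt (fun y : ℝ => Real.exp (c * y) / c) (Real.exp (c * x)) x := by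
    intro x
    have h1 : HasDerivAt (fun y : ℝ => c * y) c x := by
      simpa using (hasDerivAt_id x).const_mul c
    have h2 := (Real.hasDerivAt_exp (c * x)).comp x h1
    have h3 := h2.div_const c
    simpa [mul_div_assoc, mul_div_cancel_right₀ _ hc] using h3
  rw [integral_eq_sub_of_hasDerivAt (fun x _ => D x)
    ((Continuous.continuousOn (by continuity)).intervalIntegrable)]
  ring

lemma improve_decay (α : ℝ) (hα : 1 < α) (v : ℝ → ℝ)
    (hv : ∀ t : ℝ, 0 ≤ t →
      HasDerivAt v (-v t + 2 * v (α * t) - (v (α * t)) ^ 2) t)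
    (C D r : ℝ) (hr : 1 < r) (hD : 0 ≤ D)
    (hC : ∀ t : ℝ, 0 ≤ t → |v t| ≤ C)
    (hb : ∀ t : ℝ, 0 ≤ t → |v t| ≤ D * Real.exp (-r * t)) :
    ∀ t : ℝ, 0 ≤ t → |v t| ≤ ((2 + C) * D / (r * α - 1)) * Real.exp (-(r * α) * t) := by
  have hC0 : (0:ℝ) ≤ C := le_trans (abs_nonneg _) (hC 0 le_rfl)
  have hrα : 1 < r * α := by nlinarith
  set K : ℝ := (2 + C) * D / (r * α - 1) with hK
  have hK0 : 0 ≤ K := div_nonneg (by positivity) (by linarith)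
  set u : ℝ → ℝ := fun t => Real.exp t * v t with hu
  set g : ℝ → ℝ := fun s => Real.exp s * (2 * v (α * s) - (v (α * s)) ^ 2) with hg
  have hderiv : ∀ s : ℝ, 0 ≤ s → HasDerivAt u (g s) s := by
    intro s hs
    have := (Real.hasDerivAt_exp s).fun_mul (hv s hs)
    refine this.congr_deriv ?_
    show _ = Real.exp s * (2 * v (α * s) - (v (α * s)) ^ 2)
    ring
  have hcontg : ∀ s : ℝ, 0 ≤ s → ContinuousAt g s := by
    intro s hs
    have hvα : ContinuousAt (fun x : ℝ => v (α * x)) s := by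
      have h1 : ContinuousAt v (α * s) :=
        (hv (α * s) (by positivity)).continuousAt
      exact h1.comp ((continuous_const.mul continuous_id).continuousAt)
    exact (Real.continuous_exp.continuousAt).mul
      ((continuousAt_const.mul hvα).sub (hvα.pow 2))
  -- key FTC estimate
  have hkey : ∀ t₁ t₂ : ℝ, 0 ≤ t₁ → t₁ ≤ t₂ →
      |u t₂ - u t₁| ≤ K * Real.exp ((1 - r * α) * t₁) := by
    intro t₁ t₂ h0 h12
    have hftc : u t₂ - u t₁ = ∫ s in t₁..t₂, g s := by
      refine (integral_eq_sub_of_hasDerivAt (fun s hs => ?_) ?_).symm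
      · rw [Set.uIcc_of_le h12] at hs
        exact hderiv s (le_trans h0 hs.1)
      · apply ContinuousOn.intervalIntegrable
        intro s hs
        rw [Set.uIcc_of_le h12] at hs
        exact (hcontg s (le_trans h0 hs.1)).continuousWithinAt
    have hbd : ∀ s ∈ Set.Ioc t₁ t₂, |g s| ≤ (2 + C) * D * Real.exp ((1 - r * α) * s) := by
      intro s hs
      have hs0 : (0:ℝ) ≤ s := le_trans h0 hs.1.le
      have hαs : (0:ℝ) ≤ α * s := by positivity
      have h1 : |2 * v (α * s) - (v (α * s)) ^ 2| ≤ (2 + C) * |v (α * s)| := by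
        have hCs := hC (α * s) hαs
        calc |2 * v (α * s) - (v (α * s)) ^ 2|
            ≤ 2 * |v (α * s)| + |v (α * s)| ^ 2 := by
              refine le_trans (abs_sub _ _) ?_
              rw [abs_mul, abs_pow]
              simp [abs_two]
          _ = (2 + |v (α * s)|) * |v (α * s)| := by ring
          _ ≤ (2 + C) * |v (α * s)| :=
              mul_le_mul_of_nonneg_right (by linarith) (abs_nonneg _)
      have h2 : |v (α * s)| ≤ D * Real.exp (-r * (α * s)) := hb (α * s) hαs
      calc |g s| = Real.exp s * |2 * v (α * s) - (v (α * s)) ^ 2| := by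
            rw [hg, abs_mul, abs_of_pos (Real.exp_pos s)]
        _ ≤ Real.exp s * ((2 + C) * (D * Real.exp (-r * (α * s)))) := by
            apply mul_le_mul_of_nonneg_left _ (Real.exp_pos s).le
            exact le_trans h1 (mul_le_mul_of_nonneg_left h2 (by linarith))
        _ = (2 + C) * D * Real.exp ((1 - r * α) * s) := by
            rw [show (1 - r * α) * s = s + (-r * (α * s)) by ring, Real.exp_add]
            ring
    have hintbd : IntervalIntegrable
        (fun s => (2 + C) * D * Real.exp ((1 - r * α) * s)) volume t₁ t₂ :=
      (Continuous.continuousOn (by continuity)).intervalIntegrable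
    have hnorm : ‖∫ s in t₁..t₂, g s‖ ≤
        ∫ s in t₁..t₂, (2 + C) * D * Real.exp ((1 - r * α) * s) := by
      refine le_trans (intervalIntegral.norm_integral_le_abs_of_norm_le ?_ hintbd) ?_
      · rw [Set.uIoc_of_le h12]
        filter_upwards [MeasureTheory.ae_restrict_mem measurableSet_Ioc] with s hs
        exact hbd s hs
      · rw [abs_of_nonneg]
        apply intervalIntegral.integral_nonneg h12
        intro s _
        positivity
    have hc : (1 - r * α) ≠ 0 := by nlinarith
    have hint : (∫ s in t₁..t₂, (2 + C) * D * Real.exp ((1 - r * α) * s))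
        = (2 + C) * D * ((Real.exp ((1 - r * α) * t₂) - Real.exp ((1 - r * α) * t₁)) / (1 - r * α)) := by
      rw [intervalIntegral.integral_const_mul, integral_exp_mul_real hc]
    have hfinal : (2 + C) * D * ((Real.exp ((1 - r * α) * t₂) - Real.exp ((1 - r * α) * t₁)) / (1 - r * α))
        ≤ K * Real.exp ((1 - r * α) * t₁) := by
      set E₁ := Real.exp ((1 - r * α) * t₁) with hE₁
      set E₂ := Real.exp ((1 - r * α) * t₂) with hE₂
      have hE₁0 : 0 < E₁ := Real.exp_pos _
      have hE₂0 : 0 < E₂ := Real.exp_pos _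
      have heq : (2 + C) * D * ((E₂ - E₁) / (1 - r * α)) = (2 + C) * D * (E₁ - E₂) / (r * α - 1) := by
        rw [show (E₂ - E₁) / (1 - r * α) = (E₁ - E₂) / (r * α - 1) by
          rw [div_eq_div_iff hc (show r * α - 1 ≠ 0 by nlinarith)]; ring]
        ring
      rw [heq, hK, div_mul_eq_mul_div, div_le_div_iff₀ (by linarith) (by linarith)]
      nlinarith [mul_nonneg (mul_nonneg (by linarith : (0:ℝ) ≤ 2 + C) hD) hE₂0.le]
    calc |u t₂ - u t₁| = ‖∫ s in t₁..t₂, g s‖ := by rw [hftc]; rfl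
      _ ≤ _ := hnorm
      _ = _ := hint
      _ ≤ _ := hfinal
  -- send t₂ → ∞
  intro t ht
  have hulim : |u t| ≤ K * Real.exp ((1 - r * α) * t) := by
    have hev : ∀ᶠ t₂ in atTop, |u t| ≤ K * Real.exp ((1 - r * α) * t) + D * Real.exp ((1 - r) * t₂) := by
      filter_upwards [eventually_ge_atTop t] with t₂ h12
      have h1 := hkey t t₂ ht h12
      have h2 : |u t₂| ≤ D * Real.exp ((1 - r) * t₂) := by
        have hbb := hb t₂ (le_trans ht h12)
        calc |u t₂| = Real.exp t₂ * |v t₂| := by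
              rw [hu, abs_mul, abs_of_pos (Real.exp_pos _)]
          _ ≤ Real.exp t₂ * (D * Real.exp (-r * t₂)) :=
              mul_le_mul_of_nonneg_left hbb (Real.exp_pos _).le
          _ = D * Real.exp ((1 - r) * t₂) := by
              rw [show (1 - r) * t₂ = t₂ + (-r * t₂) by ring, Real.exp_add]; ring
      have h3 : |u t| - |u t₂| ≤ |u t - u t₂| := abs_sub_abs_le_abs_sub _ _
      rw [abs_sub_comm] at h3
      linarith
    have hlim : Tendsto (fun t₂ : ℝ => K * Real.exp ((1 - r * α) * t) + D * Real.exp ((1 - r) * t₂))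
        atTop (nhds (K * Real.exp ((1 - r * α) * t) + D * 0)) := by
      apply tendsto_const_nhds.add
      apply Tendsto.const_mul
      apply Real.tendsto_exp_atBot.comp
      exact (tendsto_const_mul_atBot_of_neg (by linarith : (1:ℝ) - r < 0)).mpr tendsto_id
    have := ge_of_tendsto hlim hev
    simpa using this
  have habs : |v t| = Real.exp (-t) * |u t| := by
    rw [hu]
    simp only
    rw [abs_mul, abs_of_pos (Real.exp_pos _), ← mul_assoc, ← Real.exp_add]
    simp
  rw [habs]
  calc Real.exp (-t) * |u t| ≤ Real.exp (-t) * (K * Real.exp ((1 - r * α) * t)) :=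
        mul_le_mul_of_nonneg_left hulim (Real.exp_pos _).le
    _ = K * Real.exp (-(r * α) * t) := by
        rw [show -(r * α) * t = -t + (1 - r * α) * t + (r*α*t - r*α*t) by ring]
        rw [show (-t : ℝ) + (1 - r * α) * t + (r*α*t - r*α*t) = -t + (1 - r * α) * t by ring]
        rw [Real.exp_add]; ring

/-- Constants in the bootstrap. -/
noncomputable def Dseq (C ρ α : ℝ) : ℕ → ℝ
  | 0 => C
  | n + 1 => (2 + C) * Dseq C ρ α n / (ρ * α ^ (n + 1) - 1)

theorem fast_decay_implies_zero (α : ℝ) (hα : 1 < α) (v : ℝ → ℝ) (C ρ : ℝ) (hρ : 1 < ρ)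
    (hv : ∀ t : ℝ, 0 ≤ t →
      HasDerivAt v (-v t + 2 * v (α * t) - (v (α * t)) ^ 2) t)
    (hv0 : v 0 = 0)
    (hbound : ∀ t : ℝ, 0 ≤ t → |v t| ≤ C * Real.exp (-ρ * t)) :
    ∀ t : ℝ, 0 ≤ t → v t = 0 := by
  have hC0 : (0:ℝ) ≤ C := by
    have := hbound 0 le_rfl
    simp [hv0] at this
    exact this
  have hCb : ∀ t : ℝ, 0 ≤ t → |v t| ≤ C := by
    intro t ht
    refine le_trans (hbound t ht) ?_
    calc C * Real.exp (-ρ * t) ≤ C * 1 := by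
          apply mul_le_mul_of_nonneg_left _ hC0
          rw [Real.exp_le_one_iff]
          nlinarith
      _ = C := mul_one C
  have hrn : ∀ n : ℕ, 1 < ρ * α ^ n := by
    intro n
    have h1 : (1:ℝ) ≤ α ^ n := one_le_pow₀ hα.le
    nlinarith
  have hDn : ∀ n : ℕ, 0 ≤ Dseq C ρ α n := by
    intro n
    induction n with
    | zero => exact hC0
    | succ n ih =>
      show 0 ≤ (2 + C) * Dseq C ρ α n / (ρ * α ^ (n + 1) - 1)
      apply div_nonneg (by positivity)
      linarith [hrn (n+1)]
  have hbn : ∀ n : ℕ, ∀ t : ℝ, 0 ≤ t → |v t| ≤ Dseq C ρ α n * Real.exp (-(ρ * α ^ n) * t) := by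
    intro n
    induction n with
    | zero =>
      intro t ht
      simpa [Dseq] using hbound t ht
    | succ n ih =>
      have := improve_decay α hα v hv C (Dseq C ρ α n) (ρ * α ^ n) (hrn n) (hDn n) hCb ih
      intro t ht
      have h2 := this t ht
      have he : ρ * α ^ n * α = ρ * α ^ (n + 1) := by rw [pow_succ]; ring
      rw [he] at h2
      exact h2
  -- choose N with 3 + C ≤ ρ * α ^ (N + 1 + n) for all n, so Dseq is decreasing from N
  have hex : ∃ N : ℕ, 3 + C ≤ α ^ N := by
    obtain ⟨N, hN⟩ := pow_unbounded_of_one_lt (3 + C) hα  -- name guess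
    exact ⟨N, hN.le⟩
  obtain ⟨N, hN⟩ := hex
  have hmono : ∀ n : ℕ, Dseq C ρ α (N + n) ≤ Dseq C ρ α N := by
    intro n
    induction n with
    | zero => simp
    | succ n ih =>
      have hden : 2 + C ≤ ρ * α ^ (N + n + 1) - 1 := by
        have h1 : α ^ N ≤ α ^ (N + n + 1) :=
          pow_le_pow_right₀ (by linarith) (by omega)
        nlinarith [hrn (N + n + 1)]
      have : Dseq C ρ α (N + (n+1)) = (2 + C) * Dseq C ρ α (N + n) / (ρ * α ^ (N + n + 1) - 1) := by
        show Dseq C ρ α ((N + n) + 1) = _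
        rfl
      rw [this]
      have hd0 : 0 < ρ * α ^ (N + n + 1) - 1 := by linarith [hrn (N + n + 1)]
      have hstep : (2 + C) * Dseq C ρ α (N + n) / (ρ * α ^ (N + n + 1) - 1)
          ≤ Dseq C ρ α (N + n) := by
        rw [div_le_iff₀ hd0]
        nlinarith [hDn (N + n)]
      exact le_trans hstep ih
  -- conclude
  intro t ht
  rcases eq_or_lt_of_le ht with h | h
  · rw [← h]; exact hv0
  have hle : ∀ n : ℕ, |v t| ≤ Dseq C ρ α N * Real.exp (-(ρ * α ^ (N + n)) * t) := by
    intro n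
    refine le_trans (hbn (N + n) t ht) ?_
    apply mul_le_mul_of_nonneg_right (hmono n) (Real.exp_pos _).le
  have hlim : Filter.Tendsto (fun n : ℕ => Dseq C ρ α N * Real.exp (-(ρ * α ^ (N + n)) * t))
      Filter.atTop (nhds 0) := by
    rw [show (0:ℝ) = Dseq C ρ α N * 0 by ring]
    apply Filter.Tendsto.const_mul
    apply Real.tendsto_exp_atBot.comp
    have h1 : Filter.Tendsto (fun n : ℕ => ρ * α ^ (N + n) * t) Filter.atTop Filter.atTop := by
      apply Filter.Tendsto.atTop_mul_const h  -- (fun n => ρ * α^(N+n)) → atTop times t>0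
      apply Filter.Tendsto.const_mul_atTop (by linarith : (0:ℝ) < ρ)
      have h3 := (tendsto_pow_atTop_atTop_of_one_lt hα).comp (Filter.tendsto_add_atTop_nat N)
      simpa [Function.comp_def, Nat.add_comm] using h3
    have : (fun n : ℕ => -(ρ * α ^ (N + n)) * t) = fun n => -(ρ * α ^ (N + n) * t) := by
      funext n; ring
    rw [this]
    exact Filter.tendsto_neg_atBot_iff.mpr h1
  have habs : |v t| ≤ 0 := ge_of_tendsto hlim (Filter.Eventually.of_forall hle)
  exact abs_eq_zero.mp (le_antisymm habs (abs_nonneg _))
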